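/- Fix n ≥ 1 and s ∈ (0,1). Let u : ℝⁿ → ℝ be bounded and continuous, let x₀ ∈ ℝⁿ and y₀ > 0, and let Φ_{y₀}(t) := (1/(t·Γ(s))) · (y₀²/(2t))^s · e^{-y₀²/(2t)} for t > 0. Then the subordination formula ∫₀^∞ Φ_{y₀}(t) · ( ∫_{ℝⁿ} (2πt)^{-n/2} e^{-|x − x₀|²/(2t)} u(x) dx ) dt = ∫_{ℝⁿ} K_{y₀}(x₀ − x) u(x) dx holds: averaging the heat semigroup applied to u against the density Φ_{y₀} gives the Poisson-type extension K_{y₀} ∗ u(x₀). -/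

import Mathlib

open MeasureTheory Real

/-- The Poisson-type kernel `K_y(x) = C_{n,s} · y^{2s} / (|x|² + y²)^{n/2+s}`, where
`C_{n,s} = Γ(s + n/2) / (π^{n/2} Γ(s))`. -/
noncomputable def poissonKernelNS (n : ℕ) (s : ℝ) (y : ℝ) (x : EuclideanSpace ℝ (Fin n)) : ℝ :=
  (Real.Gamma (s + n / 2) / (Real.pi ^ ((n : ℝ) / 2) * Real.Gamma s))
    * y ^ (2 * s) / (‖x‖ ^ 2 + y ^ 2) ^ ((n : ℝ) / 2 + s)

/-
Both sides are integrals of `u` against a kernel in `x`. The integrand on the left is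
dominated by `sup |u|` times `Φ_{y₀}(t)` times a Gaussian of total mass one, so Fubini
applies, and the claim reduces to computing `∫₀^∞ Φ_y(t) (2πt)^{-n/2} e^{-|x|²/(2t)} dt`.
That integrand is a multiple of `t^{-a-1} e^{-b/t}` with `a = s + n/2` and
`b = (|x|² + y²)/2`, whose integral is `Γ(a)/b^a` by the substitution `t ↦ 1/t` into
Euler's integral; the constants combine into `K_y(x)`.
-/

open Set

theorem rpow_neg_sub_one_mul_exp_neg_div_eq_comp_inv {a b t : ℝ} (ht : 0 < t) :
    t ^ (-a - 1) * exp (-(b / t)) =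
      (|(-1 : ℝ)| * t ^ ((-1 : ℝ) - 1)) •
        ((t ^ (-1 : ℝ)) ^ (a - 1) * exp (-(b * t ^ (-1 : ℝ)))) := by
  rw [rpow_neg_one, inv_rpow ht.le, ← rpow_neg ht.le, smul_eq_mul, abs_neg, abs_one, one_mul,
    ← mul_assoc, ← rpow_add ht, div_eq_mul_inv]
  ring_nf

theorem integrableOn_rpow_neg_sub_one_mul_exp_neg_div {a b : ℝ} (ha : 0 < a) (hb : 0 < b) :
    IntegrableOn (fun t : ℝ => t ^ (-a - 1) * exp (-(b / t))) (Ioi 0) := by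
  have hg : IntegrableOn (fun t : ℝ => t ^ (a - 1) * exp (-(b * t))) (Ioi 0) := by
    simpa using integrableOn_rpow_mul_exp_neg_mul_rpow (by linarith) zero_lt_one hb
  refine ((integrableOn_Ioi_comp_rpow_iff _ (by norm_num : (-1 : ℝ) ≠ 0)).2 hg).congr_fun
    (fun t ht => ?_) measurableSet_Ioi
  exact (rpow_neg_sub_one_mul_exp_neg_div_eq_comp_inv ht).symm

theorem integral_rpow_neg_sub_one_mul_exp_neg_div {a b : ℝ} (ha : 0 < a) (hb : 0 < b) :
    ∫ t in Ioi 0, t ^ (-a - 1) * exp (-(b / t)) = Gamma a / b ^ a := by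
  rw [setIntegral_congr_fun measurableSet_Ioi fun t ht =>
      rpow_neg_sub_one_mul_exp_neg_div_eq_comp_inv ht,
    integral_comp_rpow_Ioi (fun t => t ^ (a - 1) * exp (-(b * t))) (by norm_num),
    integral_rpow_mul_exp_neg_mul_Ioi ha hb, one_div, inv_rpow hb.le, inv_mul_eq_div]

noncomputable section

def heatKernel (n : ℕ) (t : ℝ) (x : EuclideanSpace ℝ (Fin n)) : ℝ :=
  (2 * π * t) ^ (-(n : ℝ) / 2) * exp (-(‖x‖ ^ 2 / (2 * t)))

def subordinatorDensity (s y t : ℝ) : ℝ :=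
  1 / (t * Gamma s) * (y ^ 2 / (2 * t)) ^ s * exp (-(y ^ 2 / (2 * t)))

variable {n : ℕ} {s y t : ℝ}

theorem heatKernel_nonneg (ht : 0 ≤ t) (x : EuclideanSpace ℝ (Fin n)) :
    0 ≤ heatKernel n t x := by
  unfold heatKernel; positivity

theorem integral_heatKernel (ht : 0 < t) : ∫ x, heatKernel n t x = 1 := by
  have hGauss := GaussianFourier.integral_rexp_neg_mul_sq_norm
    (V := EuclideanSpace ℝ (Fin n)) (inv_pos.2 (by positivity : 0 < 2 * t))
  simp only [finrank_euclideanSpace_fin, neg_mul, inv_mul_eq_div] at hGauss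
  unfold heatKernel
  rw [integral_const_mul, hGauss, div_inv_eq_mul, show π * (2 * t) = 2 * π * t by ring,
    ← rpow_add (by positivity), neg_div, neg_add_cancel, rpow_zero]

theorem integrable_heatKernel (ht : 0 < t) : Integrable (heatKernel n t) :=
  Integrable.of_integral_ne_zero (by rw [integral_heatKernel ht]; exact one_ne_zero)

theorem subordinatorDensity_eq (ht : 0 < t) :
    subordinatorDensity s y t =
      (y ^ 2 / 2) ^ s / Gamma s * (t ^ (-s - 1) * exp (-(y ^ 2 / 2 / t))) := by
  rw [subordinatorDensity, show y ^ 2 / (2 * t) = y ^ 2 / 2 / t by ring,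
    div_rpow (by positivity) ht.le, sub_eq_add_neg, rpow_add ht, rpow_neg ht.le, rpow_neg_one]
  field_simp

theorem subordinatorDensity_mul_heatKernel (ht : 0 < t) (x : EuclideanSpace ℝ (Fin n)) :
    subordinatorDensity s y t * heatKernel n t x =
      (y ^ 2 / 2) ^ s / (Gamma s * (2 * π) ^ ((n : ℝ) / 2)) *
        (t ^ (-(s + n / 2) - 1) * exp (-((‖x‖ ^ 2 + y ^ 2) / 2 / t))) := by
  have hexp : exp (-((‖x‖ ^ 2 + y ^ 2) / 2 / t)) =
      exp (-(y ^ 2 / 2 / t)) * exp (-(‖x‖ ^ 2 / (2 * t))) := by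
    rw [← exp_add]; ring_nf
  rw [subordinatorDensity_eq ht, heatKernel, neg_div, rpow_neg (by positivity),
    mul_rpow (by positivity) ht.le, show -(s + n / 2) - 1 = (-s - 1) + -(n / 2) by ring,
    rpow_add ht, rpow_neg ht.le, hexp]
  field_simp

theorem poissonKernelNS_neg (x : EuclideanSpace ℝ (Fin n)) :
    poissonKernelNS n s y (-x) = poissonKernelNS n s y x := by
  rw [poissonKernelNS, norm_neg, poissonKernelNS]

theorem integral_subordinatorDensity_mul_heatKernel (hs : 0 < s) (hy : 0 < y)
    (x : EuclideanSpace ℝ (Fin n)) :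
    ∫ t in Ioi 0, subordinatorDensity s y t * heatKernel n t x = poissonKernelNS n s y x := by
  have hP : 0 < ‖x‖ ^ 2 + y ^ 2 := by positivity
  rw [setIntegral_congr_fun measurableSet_Ioi fun t ht => subordinatorDensity_mul_heatKernel ht x,
    integral_const_mul, integral_rpow_neg_sub_one_mul_exp_neg_div (by positivity) (by positivity),
    poissonKernelNS, div_rpow hP.le zero_le_two, div_rpow (sq_nonneg y) zero_le_two,
    mul_rpow zero_le_two pi_pos.le, ← rpow_natCast y 2, ← rpow_mul hy.le,
    add_comm ((n : ℝ) / 2) s, rpow_add zero_lt_two]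
  push_cast
  field_simp

theorem integrableOn_subordinatorDensity (hs : 0 < s) (hy : y ≠ 0) :
    IntegrableOn (subordinatorDensity s y) (Ioi 0) :=
  IntegrableOn.congr_fun
    ((integrableOn_rpow_neg_sub_one_mul_exp_neg_div hs (by positivity)).const_mul _)
    (fun _ ht => (subordinatorDensity_eq ht).symm) measurableSet_Ioi

theorem integrable_subordinatorDensity_mul_heatKernel (hs : 0 < s) (hy : y ≠ 0)
    (x₀ : EuclideanSpace ℝ (Fin n)) :
    Integrable (fun p : ℝ × EuclideanSpace ℝ (Fin n) =>
        subordinatorDensity s y p.1 * heatKernel n p.1 (p.2 - x₀))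
      ((volume.restrict (Ioi 0)).prod volume) := by
  have hmeas : Measurable fun p : ℝ × EuclideanSpace ℝ (Fin n) =>
      subordinatorDensity s y p.1 * heatKernel n p.1 (p.2 - x₀) := by
    unfold subordinatorDensity heatKernel; fun_prop
  refine (integrable_prod_iff hmeas.aestronglyMeasurable).2 ⟨?_, ?_⟩
  · filter_upwards [ae_restrict_mem measurableSet_Ioi] with t ht
    exact ((integrable_heatKernel ht).comp_sub_right x₀).const_mul _
  · refine (integrableOn_subordinatorDensity hs hy).norm.congr ?_
    filter_upwards [ae_restrict_mem measurableSet_Ioi] with t ht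
    simp only [norm_mul, integral_const_mul, Real.norm_of_nonneg (heatKernel_nonneg ht.le _),
      integral_sub_right_eq_self (heatKernel n t) x₀, integral_heatKernel ht, mul_one]

end

theorem subordination_formula_general
    (n : ℕ) (s : ℝ) (hs : s ∈ Set.Ioo (0 : ℝ) 1)
    (u : EuclideanSpace ℝ (Fin n) → ℝ) (hu_cont : Continuous u)
    (hu_bdd : ∃ M : ℝ, ∀ x, |u x| ≤ M)
    (x₀ : EuclideanSpace ℝ (Fin n)) (y₀ : ℝ) (hy₀ : 0 < y₀) :
    ∫ t in Set.Ioi (0 : ℝ),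
        (1 / (t * Real.Gamma s)) * (y₀ ^ 2 / (2 * t)) ^ s * Real.exp (-(y₀ ^ 2 / (2 * t)))
          * ∫ x : EuclideanSpace ℝ (Fin n),
              (2 * Real.pi * t) ^ (-(n : ℝ) / 2) * Real.exp (-(‖x - x₀‖ ^ 2 / (2 * t))) * u x
      = ∫ x : EuclideanSpace ℝ (Fin n), poissonKernelNS n s y₀ (x₀ - x) * u x := by
  obtain ⟨M, hM⟩ := hu_bdd
  have hF : Integrable (fun p : ℝ × EuclideanSpace ℝ (Fin n) =>
      subordinatorDensity s y₀ p.1 * heatKernel n p.1 (p.2 - x₀) * u p.2)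
      ((volume.restrict (Ioi 0)).prod volume) :=
    (integrable_subordinatorDensity_mul_heatKernel hs.1 hy₀.ne' x₀).mul_bdd
      (hu_cont.comp continuous_snd).aestronglyMeasurable (ae_of_all _ fun p => hM p.2)
  calc _ = ∫ t in Ioi 0, ∫ x, subordinatorDensity s y₀ t * heatKernel n t (x - x₀) * u x := by
        congr 1 with t
        rw [← integral_const_mul]
        simp only [subordinatorDensity, heatKernel, mul_assoc]
    _ = ∫ x, ∫ t in Ioi 0, subordinatorDensity s y₀ t * heatKernel n t (x - x₀) * u x :=
        integral_integral_swap hF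
    _ = _ := by
        simp only [integral_mul_const, integral_subordinatorDensity_mul_heatKernel hs.1 hy₀,
          ← poissonKernelNS_neg (x := x₀ - _), neg_sub]

/-- For bounded continuous `u : ℝⁿ → ℝ`, `x₀ ∈ ℝⁿ`, `y₀ > 0` and the
hitting-time density `Φ_{y₀}(t) = (1/(t·Γ(s))) (y₀²/(2t))^s e^{−y₀²/(2t)}`, the
subordination formula holds: averaging the heat semigroup applied to `u` against the
density `Φ_{y₀}` gives the Poisson-type extension `K_{y₀} ∗ u(x₀)`. -/
theorem subordination_formula
    (n : ℕ) (hn : 1 ≤ n) (s : ℝ) (hs : s ∈ Set.Ioo (0 : ℝ) 1)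
    (u : EuclideanSpace ℝ (Fin n) → ℝ) (hu_cont : Continuous u)
    (hu_bdd : ∃ M : ℝ, ∀ x, |u x| ≤ M)
    (x₀ : EuclideanSpace ℝ (Fin n)) (y₀ : ℝ) (hy₀ : 0 < y₀) :
    ∫ t in Set.Ioi (0 : ℝ),
        (1 / (t * Real.Gamma s)) * (y₀ ^ 2 / (2 * t)) ^ s * Real.exp (-(y₀ ^ 2 / (2 * t)))
          * ∫ x : EuclideanSpace ℝ (Fin n),
              (2 * Real.pi * t) ^ (-(n : ℝ) / 2) * Real.exp (-(‖x - x₀‖ ^ 2 / (2 * t))) * u x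
      = ∫ x : EuclideanSpace ℝ (Fin n), poissonKernelNS n s y₀ (x₀ - x) * u x :=
  subordination_formula_general n s hs u hu_cont hu_bdd x₀ y₀ hy₀
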